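/- arXiv:2509.00355 — 3 statements merged into one kernel-verified Lean document; each statement's English description precedes it below -/
import Mathlib

section
/- Let θ be the antimorphic involution induced by an involutive letter map t : Σ → Σ, and let u, v, w ∈ Σ+ be such that uv = vw and u ⇄θ v = v ⇄θ w. Then one of the following holds: (1) there exist s ∈ Σ+ and m, n ≥ 1 with u = sᵐ = w and v = sⁿ; (2) there exist p ∈ P_θ and m, n ≥ 1 with u = pᵐ = w and v = pⁿ; (3) there exist x, y ∈ P_θ and i ≥ 0 with u = xy, v = (xy)ⁱx, and w = yx. -/
/-- The n-th power of a word: `p` concatenated with itself `n` times. -/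
def listPow {α : Type*} (p : List α) (n : ℕ) : List α := (List.replicate n p).flatten

/-- The strong θ-bi-catenation of two words. -/
def biCat {α : Type*} (θ : List α → List α) (u v : List α) : Set (List α) :=
  {u ++ v, u ++ θ v, θ u ++ v, θ u ++ θ v, v ++ u, v ++ θ u, θ v ++ u, θ v ++ θ u}

namespace ConjBiCatAux
variable {α : Type*}

lemma listPow_zero (s : List α) : listPow s 0 = [] := rfl

lemma listPow_succ (s : List α) (n : ℕ) : listPow s (n+1) = s ++ listPow s n := by
  simp [listPow, List.replicate_succ]

lemma listPow_one (s : List α) : listPow s 1 = s := by simp [listPow]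

lemma listPow_add (s : List α) (m n : ℕ) :
    listPow s (m+n) = listPow s m ++ listPow s n := by
  induction m with
  | zero => simp [listPow_zero]
  | succ k ih =>
      have : k + 1 + n = (k + n) + 1 := by omega
      rw [this, listPow_succ, ih, listPow_succ, List.append_assoc]

lemma listPow_succ' (s : List α) (n : ℕ) : listPow s (n+1) = listPow s n ++ s := by
  rw [listPow_add, listPow_one]

lemma length_listPow (s : List α) (n : ℕ) : (listPow s n).length = n * s.length := by
  induction n with
  | zero => simp [listPow_zero]
  | succ k ih => rw [listPow_succ]; simp [ih]; ring

lemma listPow_mul (s : List α) (m n : ℕ) :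
    listPow s (m * n) = listPow (listPow s n) m := by
  induction m with
  | zero => simp [listPow_zero]
  | succ k ih =>
      have : (k+1) * n = n + k * n := by ring
      rw [this, listPow_add, listPow_succ, ih]

lemma pow_root_eq {a b : List α} {k : ℕ} (hk : 1 ≤ k) (hl : a.length = b.length)
    (h : listPow a k = listPow b k) : a = b := by
  obtain ⟨j, rfl⟩ : ∃ j, k = j + 1 := ⟨k - 1, by omega⟩
  rw [listPow_succ, listPow_succ] at h
  exact (List.append_inj h hl).1

/-- commuting words have a common root -/
lemma comm_root (u v : List α) (hu : u ≠ []) (hv : v ≠ []) (h : u ++ v = v ++ u) :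
    ∃ s : List α, s ≠ [] ∧ ∃ m n : ℕ, 1 ≤ m ∧ 1 ≤ n ∧ u = listPow s m ∧ v = listPow s n := by
  rcases lt_trichotomy u.length v.length with hlt | heq | hgt
  · -- u is a proper prefix of v
    have hpre : v.take u.length = u := by
      have : (u ++ v).take u.length = (v ++ u).take u.length := by rw [h]
      rw [List.take_left, List.take_append_of_le_length (le_of_lt hlt)] at this
      exact this.symm
    set v' := v.drop u.length with hv'
    have hsplit : v = u ++ v' := by rw [← hpre, hv', List.take_append_drop]
    have hv'len : v'.length < v.length := by
      rw [hv', List.length_drop]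
      have := List.length_pos_iff.mpr hu
      have := List.length_pos_iff.mpr hv
      omega
    have hv'ne : v' ≠ [] := by
      intro hnil
      have := congrArg List.length hsplit
      rw [hnil] at this; simp at this; omega
    have hcomm' : u ++ v' = v' ++ u := by
      have : u ++ (u ++ v') = (u ++ v') ++ u := by rw [← hsplit]; exact h
      rw [List.append_assoc] at this
      exact List.append_cancel_left this
    obtain ⟨s, hs, m, n, hm, hn, hum, hvn⟩ := comm_root u v' hu hv'ne hcomm'
    exact ⟨s, hs, m, m + n, hm, by omega, hum,
      by rw [hsplit, hum, hvn, ← listPow_add]⟩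
  · -- equal lengths
    have := (List.append_inj h heq).1
    exact ⟨u, hu, 1, 1, le_refl 1, le_refl 1, (listPow_one u).symm,
      by rw [← this, listPow_one]⟩
  · have hpre : u.take v.length = v := by
      have : (v ++ u).take v.length = (u ++ v).take v.length := by rw [h]
      rw [List.take_left, List.take_append_of_le_length (le_of_lt hgt)] at this
      exact this.symm
    set u' := u.drop v.length with hu'
    have hsplit : u = v ++ u' := by rw [← hpre, hu', List.take_append_drop]
    have hu'len : u'.length < u.length := by
      rw [hu', List.length_drop]
      have := List.length_pos_iff.mpr hu
      have := List.length_pos_iff.mpr hv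
      omega
    have hu'ne : u' ≠ [] := by
      intro hnil
      have := congrArg List.length hsplit
      rw [hnil] at this; simp at this; omega
    have hcomm' : u' ++ v = v ++ u' := by
      have : (v ++ u') ++ v = v ++ (v ++ u') := by rw [← hsplit]; exact h
      rw [List.append_assoc] at this
      exact List.append_cancel_left this
    obtain ⟨s, hs, m, n, hm, hn, hum, hvn⟩ := comm_root u' v hu'ne hv hcomm'
    exact ⟨s, hs, n + m, n, by omega, hn,
      by rw [hsplit, hum, hvn, ← listPow_add], hvn⟩
termination_by u.length + v.length
decreasing_by
  all_goals
    simp only [List.length_drop]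
    have := List.length_pos_iff.mpr hu
    have := List.length_pos_iff.mpr hv
    omega

lemma comm_pow {a z : List α} (h : a ++ z = z ++ a) (k : ℕ) :
    a ++ listPow z k = listPow z k ++ a := by
  induction k with
  | zero => simp [listPow_zero]
  | succ j ih =>
      rw [listPow_succ, ← List.append_assoc, h, List.append_assoc, ih, ← List.append_assoc]

lemma prefix_of_comm {a z : List α} (hz : z ≠ []) (h : a ++ z = z ++ a) :
    a = (listPow z a.length).take a.length := by
  have hlen : a.length ≤ (listPow z a.length).length := by
    rw [length_listPow]
    have := List.length_pos_iff.mpr hz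
    nlinarith
  have h2 := comm_pow h a.length
  have := congrArg (fun l => List.take a.length l) h2
  simpa [List.take_left, List.take_append_of_le_length hlen] using this

/-- two words commuting with a common nonempty word commute with each other -/
lemma comm_trans (z a b : List α) (hz : z ≠ []) (ha : a ++ z = z ++ a)
    (hb : b ++ z = z ++ b) : a ++ b = b ++ a := by
  rcases eq_or_ne a [] with rfl | hane
  · simp
  rcases eq_or_ne b [] with rfl | hbne
  · simp
  rcases le_or_gt a.length b.length with hle | hlt
  · -- a is a prefix of b
    have hb' : b = (listPow z b.length).take b.length := prefix_of_comm hz hb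
    have ha' : a = (listPow z b.length).take a.length := by
      have h1 : a = (listPow z a.length).take a.length := prefix_of_comm hz ha
      have hsplit : listPow z b.length = listPow z a.length ++ listPow z (b.length - a.length) := by
        rw [← listPow_add]; congr 1; omega
      have hlen : a.length ≤ (listPow z a.length).length := by
        rw [length_listPow]; have := List.length_pos_iff.mpr hz; nlinarith
      rw [hsplit, List.take_append_of_le_length hlen]; exact h1
    have hpre : a = b.take a.length := by
      rw [hb', List.take_take, min_eq_left hle]; exact ha'
    set b' := b.drop a.length with hb'def
    have hbsplit : b = a ++ b' := by rw [hpre, hb'def, List.take_append_drop]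
    have hb'comm : b' ++ z = z ++ b' := by
      have : (a ++ b') ++ z = z ++ (a ++ b') := by rw [← hbsplit]; exact hb
      rw [List.append_assoc] at this
      have : a ++ (b' ++ z) = a ++ (z ++ b') := by
        rw [this, ← List.append_assoc, ← ha, List.append_assoc]
      exact List.append_cancel_left this
    have hlenb' : b'.length < b.length := by
      rw [hb'def, List.length_drop]
      have := List.length_pos_iff.mpr hane
      have := List.length_pos_iff.mpr hbne
      omega
    have hrec := comm_trans z a b' hz ha hb'comm
    rw [hbsplit, List.append_assoc, ← hrec]
  · -- symmetric: b is a prefix of a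
    have hle := le_of_lt hlt
    have ha' : a = (listPow z a.length).take a.length := prefix_of_comm hz ha
    have hb2 : b = (listPow z a.length).take b.length := by
      have h1 : b = (listPow z b.length).take b.length := prefix_of_comm hz hb
      have hsplit : listPow z a.length = listPow z b.length ++ listPow z (a.length - b.length) := by
        rw [← listPow_add]; congr 1; omega
      have hlen : b.length ≤ (listPow z b.length).length := by
        rw [length_listPow]; have := List.length_pos_iff.mpr hz; nlinarith
      rw [hsplit, List.take_append_of_le_length hlen]; exact h1
    have hpre : b = a.take b.length := by
      rw [ha', List.take_take, min_eq_left hle]; exact hb2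
    set a' := a.drop b.length with ha'def
    have hasplit : a = b ++ a' := by rw [hpre, ha'def, List.take_append_drop]
    have ha'comm : a' ++ z = z ++ a' := by
      have : (b ++ a') ++ z = z ++ (b ++ a') := by rw [← hasplit]; exact ha
      rw [List.append_assoc] at this
      have : b ++ (a' ++ z) = b ++ (z ++ a') := by
        rw [this, ← List.append_assoc, ← hb, List.append_assoc]
      exact List.append_cancel_left this
    have hlena' : a'.length < a.length := by
      rw [ha'def, List.length_drop]
      have := List.length_pos_iff.mpr hane
      have := List.length_pos_iff.mpr hbne
      omega
    have hrec := comm_trans z b a' hz hb ha'comm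
    rw [hasplit, List.append_assoc, ← hrec]
termination_by a.length + b.length
decreasing_by
  all_goals
    simp only [List.length_drop]
    have := List.length_pos_iff.mpr hane
    have := List.length_pos_iff.mpr hbne
    omega

/-- conjugacy decomposition -/
lemma conj (u v w : List α) (hu : u ≠ []) (h : u ++ v = v ++ w) :
    ∃ x y : List α, ∃ i : ℕ, y ≠ [] ∧ u = x ++ y ∧ w = y ++ x ∧
      v = listPow (x ++ y) i ++ x := by
  rcases lt_or_ge v.length u.length with hlt | hle
  · -- v proper prefix of u
    have hpre : v = u.take v.length := by
      have : (v ++ w).take v.length = (u ++ v).take v.length := by rw [h]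
      rw [List.take_left, List.take_append_of_le_length (le_of_lt hlt)] at this
      exact this
    refine ⟨v, u.drop v.length, 0, ?_, ?_, ?_, ?_⟩
    · intro hnil
      have := congrArg List.length hnil
      simp at this; omega
    · conv_lhs => rw [← List.take_append_drop v.length u, ← hpre]
    · have husplit : u = v ++ u.drop v.length := by
        conv_lhs => rw [← List.take_append_drop v.length u, ← hpre]
      have : (v ++ u.drop v.length) ++ v = v ++ w := by rw [← husplit]; exact h
      rw [List.append_assoc] at this
      exact (List.append_cancel_left this).symm
    · simp [listPow_zero]
  · -- u prefix of v
    have hpre : u = v.take u.length := by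
      have : (u ++ v).take u.length = (v ++ w).take u.length := by rw [h]
      rw [List.take_left, List.take_append_of_le_length hle] at this
      exact this
    set v' := v.drop u.length with hv'def
    have hsplit : v = u ++ v' := by
      conv_lhs => rw [← List.take_append_drop u.length v, ← hpre]
    have hlen : v'.length < v.length := by
      rw [hv'def, List.length_drop]
      have := List.length_pos_iff.mpr hu
      omega
    have h' : u ++ v' = v' ++ w := by
      have : u ++ (u ++ v') = (u ++ v') ++ w := by rw [← hsplit]; exact h
      rw [List.append_assoc] at this
      exact List.append_cancel_left this
    obtain ⟨x, y, i, hy, hux, hwx, hv'⟩ := conj u v' w hu h'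
    exact ⟨x, y, i + 1, hy, hux, hwx, by
      rw [hsplit, hv', listPow_succ, ← hux, List.append_assoc]⟩
termination_by v.length
decreasing_by
  · simp only [List.length_drop]
    have := List.length_pos_iff.mpr hu
    omega

/-- split a word equation at a common prefix -/
lemma split_common {a b c d : List α} (h : a ++ b = c ++ d) (hl : a.length ≤ c.length) :
    c = a ++ c.drop a.length ∧ b = c.drop a.length ++ d := by
  have hpre : a = c.take a.length := by
    have := congrArg (List.take a.length) h
    rwa [List.take_left, List.take_append_of_le_length hl] at this
  constructor
  · conv_lhs => rw [← List.take_append_drop a.length c, ← hpre]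
  · have hc : c = a ++ c.drop a.length := by
      conv_lhs => rw [← List.take_append_drop a.length c, ← hpre]
    rw [hc, List.append_assoc] at h
    exact List.append_cancel_left h

section Theta
variable (t : α → α) (ht : ∀ a, t (t a) = a) (θ : List α → List α)
  (hθ : ∀ u : List α, θ u = (u.map t).reverse)

include hθ

lemma theta_app (a b : List α) : θ (a ++ b) = θ b ++ θ a := by
  simp [hθ]

lemma theta_len (a : List α) : (θ a).length = a.length := by simp [hθ]

set_option linter.unusedSectionVars false

include ht

lemma theta_theta (a : List α) : θ (θ a) = a := by
  simp only [hθ, List.map_reverse, List.reverse_reverse, List.map_map]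
  have : t ∘ t = id := funext ht
  rw [this, List.map_id]

lemma theta_pow (s : List α) (k : ℕ) : θ (listPow s k) = listPow (θ s) k := by
  induction k with
  | zero => simp [listPow_zero, hθ]
  | succ j ih =>
      rw [listPow_succ, theta_app t θ hθ, ih, listPow_succ']

lemma theta_root {s : List α} {k : ℕ} (hk : 1 ≤ k) (h : θ (listPow s k) = listPow s k) :
    θ s = s := by
  rw [theta_pow t ht θ hθ] at h
  exact pow_root_eq hk (theta_len t θ hθ s) h

/-- descent lemma for the equation x·x·y = y·x·θ(x) -/
lemma desc (x y : List α) (hx : x ≠ []) (h : x ++ (x ++ y) = y ++ (x ++ θ x)) :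
    ∃ s : List α, θ s = s ∧ ∃ c d : ℕ, 1 ≤ c ∧ x = listPow s c ∧ y = listPow s d := by
  have hxpos := List.length_pos_iff.mpr hx
  rcases Nat.lt_or_ge y.length x.length with hlt | hge
  · -- y is a proper prefix of x (or empty)
    rcases eq_or_ne y [] with rfl | hyne
    · -- x ++ x = x ++ θ x
      simp only [List.nil_append, List.append_nil] at h
      have : x = θ x := List.append_cancel_left h
      exact ⟨x, this.symm, 1, 0, le_refl 1, (listPow_one x).symm, (listPow_zero x).symm⟩
    · have hypos := List.length_pos_iff.mpr hyne
      -- x = y ++ z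
      obtain ⟨hxsplit, -⟩ := split_common h.symm (by omega)
      set z := x.drop y.length with hzdef
      have hzne : z ≠ [] := by
        intro hnil
        have := congrArg List.length hxsplit
        rw [hnil] at this; simp at this; omega
      -- rewrite h with x = y ++ z
      rw [hxsplit] at h
      rw [theta_app t θ hθ] at h
      -- h : (y++z) ++ ((y++z) ++ y) = y ++ ((y++z) ++ (θ z ++ θ y))
      have h2 : z ++ ((y ++ z) ++ y) = (y ++ z) ++ (θ z ++ θ y) := by
        apply List.append_cancel_left (as := y)
        calc y ++ (z ++ ((y ++ z) ++ y)) = (y ++ z) ++ ((y ++ z) ++ y) := by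
              simp [List.append_assoc]
          _ = y ++ ((y ++ z) ++ (θ z ++ θ y)) := h
      -- split off the suffix of length |y|
      have h3 : (z ++ (y ++ z)) ++ y = ((y ++ z) ++ θ z) ++ θ y := by
        calc (z ++ (y ++ z)) ++ y = z ++ ((y ++ z) ++ y) := by simp [List.append_assoc]
          _ = (y ++ z) ++ (θ z ++ θ y) := h2
          _ = ((y ++ z) ++ θ z) ++ θ y := by simp [List.append_assoc]
      obtain ⟨h4, h5⟩ := List.append_inj' h3 (theta_len t θ hθ y).symm
      -- h4 : z ++ (y ++ z) = (y ++ z) ++ θ z, h5 : y = θ y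
      have h6 : (z ++ y) ++ z = (y ++ z) ++ θ z := by
        rw [← h4]; simp [List.append_assoc]
      obtain ⟨h7, h8⟩ := List.append_inj h6 (by simp; omega)
      -- h7 : z ++ y = y ++ z, h8 : z = θ z
      obtain ⟨s, hs, c, d, hc, hd, hzc, hyd⟩ := comm_root z y hzne hyne h7
      have hθs : θ s = s := by
        apply theta_root t ht θ hθ hc
        rw [← hzc, ← h8]
      exact ⟨s, hθs, d + c, d, by omega, by rw [hxsplit, hzc, hyd, listPow_add], hyd⟩
  · -- x is a prefix of y
    obtain ⟨hysplit, hrest⟩ := split_common h hge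
    set y₁ := y.drop x.length with hy1def
    have hlen : y₁.length < y.length := by
      rw [hy1def, List.length_drop]; omega
    rw [hysplit] at hrest
    have hrec : x ++ (x ++ y₁) = y₁ ++ (x ++ θ x) := hrest
    obtain ⟨s, hθs, c, d, hc, hxc, hy1d⟩ := desc x y₁ hx hrec
    exact ⟨s, hθs, c, c + d, hc, hxc, by rw [hysplit, hxc, hy1d, listPow_add]⟩
termination_by y.length
decreasing_by
  · simp only [List.length_drop]; omega

end Theta

/-- case 1 conclusion from `uv = vw` and `uv = vu` -/
lemma case1_of_comm (u v w : List α) (hu : u ≠ []) (hv : v ≠ [])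
    (h1 : u ++ v = v ++ w) (hc : u ++ v = v ++ u) :
    ∃ s : List α, s ≠ [] ∧ ∃ m n : ℕ, 1 ≤ m ∧ 1 ≤ n ∧
      u = listPow s m ∧ w = listPow s m ∧ v = listPow s n := by
  have hwu : w = u := List.append_cancel_left (hc.symm.trans h1).symm
  obtain ⟨s, hs, m, n, hm, hn, hum, hvn⟩ := comm_root u v hu hv hc
  exact ⟨s, hs, m, n, hm, hn, hum, hwu ▸ hum, hvn⟩

/-- case 1 conclusion from `uv = vw` and `vu = wv` -/
lemma case1_of_e (u v w : List α) (hu : u ≠ []) (hv : v ≠ [])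
    (h1 : u ++ v = v ++ w) (he : v ++ u = w ++ v) :
    ∃ s : List α, s ≠ [] ∧ ∃ m n : ℕ, 1 ≤ m ∧ 1 ≤ n ∧
      u = listPow s m ∧ w = listPow s m ∧ v = listPow s n := by
  have ha : u ++ (v ++ v) = (v ++ v) ++ u := by
    calc u ++ (v ++ v) = (u ++ v) ++ v := by rw [List.append_assoc]
      _ = (v ++ w) ++ v := by rw [h1]
      _ = v ++ (w ++ v) := by rw [List.append_assoc]
      _ = v ++ (v ++ u) := by rw [← he]
      _ = (v ++ v) ++ u := by rw [List.append_assoc]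
  have hb : v ++ (v ++ v) = (v ++ v) ++ v := by simp [List.append_assoc]
  have hvvne : v ++ v ≠ [] := by simp [hv]
  have hc : u ++ v = v ++ u := comm_trans (v ++ v) u v hvvne ha hb
  exact case1_of_comm u v w hu hv h1 hc

/-- if `u` and `v` are θ-palindromes, `uv = vw` and `wv ∈ u ⇄θ v`, we are in case 1 -/
lemma palin_step (t : α → α) (θ : List α → List α) (u v w : List α)
    (hu : u ≠ []) (hv : v ≠ []) (h1 : u ++ v = v ++ w)
    (hU : θ u = u) (hV : θ v = v) (hm : w ++ v ∈ biCat θ u v) :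
    ∃ s : List α, s ≠ [] ∧ ∃ m n : ℕ, 1 ≤ m ∧ 1 ≤ n ∧
      u = listPow s m ∧ w = listPow s m ∧ v = listPow s n := by
  simp only [biCat, Set.mem_insert_iff, Set.mem_singleton_iff, hU, hV] at hm
  have huv : w ++ v = u ++ v → _ := fun h =>
    case1_of_comm u v w hu hv h1
      (by rw [h1, List.append_cancel_right h])
  have hvu : w ++ v = v ++ u → _ := fun h =>
    case1_of_e u v w hu hv h1 h.symm
  rcases hm with h | h | h | h | h | h | h | h
  exacts [huv h, huv h, huv h, huv h, hvu h, hvu h, hvu h, hvu h]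

end ConjBiCatAux

open ConjBiCatAux in
/-- If `uv = vw` and `u ⇄θ v = v ⇄θ w`, then one of the three listed
alternatives holds. -/
theorem conj_biCat_case1 {α : Type*} (t : α → α) (ht : ∀ a, t (t a) = a)
    (θ : List α → List α) (hθ : ∀ u : List α, θ u = (u.map t).reverse)
    (u v w : List α) (hu : u ≠ []) (hv : v ≠ []) (hw : w ≠ [])
    (h1 : u ++ v = v ++ w) (h2 : biCat θ u v = biCat θ v w) :
    (∃ s : List α, s ≠ [] ∧ ∃ m n : ℕ, 1 ≤ m ∧ 1 ≤ n ∧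
      u = listPow s m ∧ w = listPow s m ∧ v = listPow s n) ∨
    (∃ p : List α, θ p = p ∧ ∃ m n : ℕ, 1 ≤ m ∧ 1 ≤ n ∧
      u = listPow p m ∧ w = listPow p m ∧ v = listPow p n) ∨
    (∃ x y : List α, θ x = x ∧ θ y = y ∧ ∃ i : ℕ,
      u = x ++ y ∧ v = listPow (x ++ y) i ++ x ∧ w = y ++ x) := by
  obtain ⟨x, y, i, hy, hux, hwyx, hvi⟩ := conj u v w hu h1
  rcases eq_or_ne x [] with rfl | hx
  · -- u = y = w, v = yⁱ : case 1
    left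
    simp only [List.nil_append, List.append_nil] at hux hwyx hvi
    have hi : 1 ≤ i := by
      rcases Nat.eq_zero_or_pos i with rfl | h
      · rw [listPow_zero] at hvi; exact absurd hvi hv
      · exact h
    exact ⟨y, hy, 1, i, le_refl 1, hi, by rw [hux, listPow_one],
      by rw [hwyx, listPow_one], hvi⟩
  · -- both x and y nonempty
    have hθx := theta_len t θ hθ x
    have hθy := theta_len t θ hθ y
    have hθv := theta_len t θ hθ v
    have hθw := theta_len t θ hθ w
    have hm : v ++ u ∈ biCat θ v w := by
      rw [← h2]; simp [biCat]
    simp only [biCat, Set.mem_insert_iff, Set.mem_singleton_iff] at hm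
    have hwθ : θ w = θ x ++ θ y := by rw [hwyx, theta_app t θ hθ]
    rcases hm with h | h | h | h | h | h | h | h
    · -- vu = vw : u = w
      left
      have hwu : w = u := (List.append_cancel_left h).symm
      exact case1_of_comm u v w hu hv h1 (by rw [h1, hwu])
    · -- vu = vθw : u = θw
      have h' : x ++ y = θ x ++ θ y := by
        rw [← hux, ← hwθ]; exact List.append_cancel_left h
      obtain ⟨hxx, hyy⟩ := List.append_inj h' hθx.symm
      exact Or.inr (Or.inr ⟨x, y, hxx.symm, hyy.symm, i, hux, hvi, hwyx⟩)
    · -- vu = θv w : v = θv, u = w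
      obtain ⟨hvv, huw⟩ := List.append_inj h hθv.symm
      left
      exact case1_of_comm u v w hu hv h1 (by rw [h1, huw])
    · -- vu = θv θw : v = θv, u = θw
      obtain ⟨hvv, huw⟩ := List.append_inj h hθv.symm
      have h' : x ++ y = θ x ++ θ y := by rw [← hux, ← hwθ]; exact huw
      obtain ⟨hxx, hyy⟩ := List.append_inj h' hθx.symm
      exact Or.inr (Or.inr ⟨x, y, hxx.symm, hyy.symm, i, hux, hvi, hwyx⟩)
    · -- vu = wv
      left
      exact case1_of_e u v w hu hv h1 h
    · -- vu = w θv
      rcases Nat.eq_zero_or_pos i with rfl | hi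
      · -- i = 0 : v = x, use descent lemma
        rw [listPow_zero, List.nil_append] at hvi
        have hd : x ++ (x ++ y) = y ++ (x ++ θ x) := by
          have : v ++ u = (y ++ x) ++ θ v := by rw [h, hwyx]
          rw [hvi, hux, List.append_assoc] at this
          exact this
        obtain ⟨s, hθs, c, d, hc, hxc, hyd⟩ := desc t ht θ hθ x y hx hd
        have hd1 : 1 ≤ d := by
          rcases Nat.eq_zero_or_pos d with rfl | h'
          · rw [listPow_zero] at hyd; exact absurd hyd hy
          · exact h'
        right; left
        refine ⟨s, hθs, c + d, c, by omega, hc, ?_, ?_, ?_⟩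
        · rw [hux, hxc, hyd, listPow_add]
        · rw [hwyx, hxc, hyd, ← listPow_add, Nat.add_comm]
        · rw [hvi, hxc]
      · -- i ≥ 1 : xy = yx, everything a power of a common root
        obtain ⟨j, rfl⟩ : ∃ j, i = j + 1 := ⟨i - 1, by omega⟩
        have hsp : (x ++ y) ++ ((listPow (x ++ y) j ++ x) ++ u)
            = (y ++ x) ++ θ v := by
          rw [← hwyx, ← h, hvi, listPow_succ]
          simp [List.append_assoc]
        obtain ⟨hcomm, -⟩ := List.append_inj hsp (by simp; omega)
        obtain ⟨s, hs, c, d, hc, hd, hxc, hyd⟩ := comm_root x y hx hy hcomm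
        left
        refine ⟨s, hs, c + d, (j + 1) * (c + d) + c, by omega, by omega, ?_, ?_, ?_⟩
        · rw [hux, hxc, hyd, listPow_add]
        · rw [hwyx, hxc, hyd, ← listPow_add, Nat.add_comm]
        · rw [hvi, hxc, hyd, ← listPow_add, listPow_add s ((j+1)*(c+d)) c,
            listPow_mul]
    · -- vu = θw v
      rcases Nat.eq_zero_or_pos i with rfl | hi
      · -- i = 0 : v = x; get θx = x and θu = u, then palindrome step
        rw [listPow_zero, List.nil_append] at hvi
        have hsp : x ++ (x ++ y) = θ x ++ (θ y ++ x) := by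
          have h' := h
          rw [hvi, hux, hwθ, List.append_assoc] at h'
          exact h'
        obtain ⟨hxx, hrest⟩ := List.append_inj hsp hθx.symm
        have hUu : θ u = u := by
          rw [hux, theta_app t θ hθ, ← hxx, hrest]
        have hVv : θ v = v := by rw [hvi, ← hxx]
        left
        refine palin_step t θ u v w hu hv h1 hUu hVv ?_
        rw [h2]; simp [biCat]
      · -- i ≥ 1 : xy = θx θy : case 3
        obtain ⟨j, rfl⟩ : ∃ j, i = j + 1 := ⟨i - 1, by omega⟩
        have hsp : (x ++ y) ++ ((listPow (x ++ y) j ++ x) ++ u)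
            = θ w ++ v := by
          rw [← h, hvi, listPow_succ]
          simp [List.append_assoc]
        rw [hwθ] at hsp
        have hl : (x ++ y).length = (θ x ++ θ y).length := by simp; omega
        obtain ⟨hcomm, -⟩ := List.append_inj hsp hl
        obtain ⟨hxx, hyy⟩ := List.append_inj hcomm hθx.symm
        exact Or.inr (Or.inr ⟨x, y, hxx.symm, hyy.symm, j + 1, hux, hvi, hwyx⟩)
    · -- vu = θw θv : u, v θ-palindromes
      have hsp : v ++ u = θ v ++ θ u := by
        rw [h, ← theta_app t θ hθ, ← h1, theta_app t θ hθ]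
      obtain ⟨hvv, huu⟩ := List.append_inj hsp hθv.symm
      left
      refine palin_step t θ u v w hu hv h1 huu.symm hvv.symm ?_
      rw [h2]; simp [biCat]
end

section
/- Let θ be the antimorphic involution induced by an involutive letter map t : Σ → Σ, and let u, v, w ∈ Σ+ be such that uv = θ(v)w and u ⇄θ v = v ⇄θ w. Then one of the following holds: (1) u = θ(w) and v = γw for some γ ∈ P_θ; (2) there exist x, y ∈ P_θ and j ≥ 0 with u = (xy)^{j+1}x = w and v = yx; (3) there exist a word x and y ∈ P_θ with u = xy = θ(w) and v = θ(x); (4) there exist x, y ∈ P_θ with u = xy = θ(w) and v = x; (5) there exist α ∈ P_θ and m, n ≥ 1 with u = αᵐ = w and v = αⁿ; (6) there exist t' ∈ Σ+ and k, n ≥ 0 such that, with s = t'θ(t'), u = θ(t')sᵏ = θ(w) and v = sⁿt'. -/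
/-!
Comparing `u v` with `θ(v) w` from the left, either `θ(v) = u g` and `v = g w`, which gives
alternative (1) with `γ = g`, or `u = θ(v) s` and `w = s v`; in the latter case `s` turns out to
be a θ-palindrome, which is alternative (3) with `x = θ(v)`, `y = s`. The word `v w = v s v`
lies in `u ⇄θ v`, and matching it against the eight words of that set shows that `v` or `s` is a
θ-palindrome. If `v` is one, matching `w v = s v v` against `u ⇄θ v` leaves a single
non-immediate case, `s v = v θ(s)`, in which `w` is a palindrome too; then
`v ⇄θ w = {v w, w v}`, and `θ(u) v = θ(s) v v` lying in it forces `θ(s) = s`. The individual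
cases are settled by the Lyndon–Schützenberger description of conjugate words `x z = z y`:
`x = p q`, `y = q p`, `z = (p q)ᵏ p`.
-/

section Words

variable {α : Type*}

theorem listPow_zero (a : List α) : listPow a 0 = [] := rfl

theorem listPow_succ (a : List α) (n : ℕ) : listPow a (n + 1) = a ++ listPow a n := by
  simp [listPow, List.replicate_succ]

theorem listPow_succ' (a : List α) (n : ℕ) : listPow a (n + 1) = listPow a n ++ a := by
  simp [listPow, List.replicate_succ']

theorem append_listPow_append (p q : List α) (k : ℕ) :
    p ++ listPow (q ++ p) k = listPow (p ++ q) k ++ p := by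
  induction k with
  | zero => simp [listPow_zero]
  | succ k ih => rw [listPow_succ, listPow_succ, List.append_assoc (p ++ q), ← ih]; simp

theorem exists_listPow_of_conj {x y z : List α} (hx : x ≠ []) (h : x ++ z = z ++ y) :
    ∃ p q k, x = p ++ q ∧ y = q ++ p ∧ z = listPow (p ++ q) k ++ p := by
  rcases List.append_eq_append_iff.mp h with ⟨z', hz, hz'⟩ | ⟨r, hxr, hyr⟩
  · have : z'.length < z.length := by simp [hz, List.length_pos_iff.mpr hx]
    obtain ⟨p, q, k, hpq, hqp, hz'pq⟩ := exists_listPow_of_conj hx (hz.symm.trans hz')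
    exact ⟨p, q, k + 1, hpq, hqp, by rw [hz, hz'pq, hpq, listPow_succ]; simp⟩
  · exact ⟨z, r, 0, hxr, hyr, by simp [listPow_zero]⟩
termination_by z.length

theorem append_comm_of_sq_append_comm {x y : List α} (h : x ++ x ++ y = y ++ x ++ x) :
    x ++ y = y ++ x := by
  rcases eq_or_ne x [] with rfl | hx
  · simp
  rw [List.append_assoc, List.append_assoc] at h
  rcases List.append_eq_append_iff.mp h with ⟨a, hy, ha⟩ | ⟨c, hxc, hc⟩
  · have : a.length < y.length := by simp [hy, List.length_pos_iff.mpr hx]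
    have hxa : x ++ a = a ++ x :=
      append_comm_of_sq_append_comm (by rw [hy] at ha; simpa using ha)
    rw [hy, hxa, ← List.append_assoc, hxa]
  · subst hxc
    have hyc : y ++ c = c ++ y :=
      List.append_inj_left (t₁ := y ++ c) (t₂ := c ++ y) (by simpa using hc)
        (by simp [add_comm])
    rw [List.append_assoc, hyc]
termination_by y.length

theorem eq_of_conj_of_conj {x y v : List α} (h₁ : x ++ v = v ++ y) (h₂ : y ++ v = v ++ x) :
    x = y := by
  rcases eq_or_ne x [] with rfl | hx
  · simpa using h₁
  obtain ⟨p, q, k, rfl, rfl, rfl⟩ := exists_listPow_of_conj hx h₁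
  suffices q ++ p = p ++ q from this.symm
  cases k with
  | zero =>
    exact (append_comm_of_sq_append_comm (by simpa [listPow_zero] using h₂.symm)).symm
  | succ k =>
    rw [listPow_succ] at h₂
    exact List.append_inj_left (t₁ := listPow (p ++ q) (k + 1) ++ p)
      (t₂ := listPow (p ++ q) k ++ p ++ (p ++ q)) (by simpa [listPow_succ] using h₂)
      (by simp [add_comm])

structure IsAntimorphism (θ : List α → List α) : Prop where
  map_append : ∀ a b, θ (a ++ b) = θ b ++ θ a
  length_map : ∀ a, (θ a).length = a.length

namespace IsAntimorphism

variable {θ : List α → List α}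

theorem of_eq_reverse_map {t : α → α} (hθ : ∀ u, θ u = (u.map t).reverse) :
    IsAntimorphism θ :=
  ⟨fun a b => by simp [hθ], fun a => by simp [hθ]⟩

theorem map_eq_nil_iff (hθ : IsAntimorphism θ) {a : List α} : θ a = [] ↔ a = [] := by
  rw [← List.length_eq_zero_iff, hθ.length_map, List.length_eq_zero_iff]

theorem map_listPow (hθ : IsAntimorphism θ) (a : List α) (n : ℕ) :
    θ (listPow a n) = listPow (θ a) n := by
  induction n with
  | zero => exact hθ.map_eq_nil_iff.mpr rfl
  | succ n ih => rw [listPow_succ, hθ.map_append, ih, listPow_succ']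

theorem map_listPow_append_eq_self (hθ : IsAntimorphism θ) {p q : List α} (hp : θ p = p)
    (hq : θ q = q) (k : ℕ) : θ (listPow (p ++ q) k ++ p) = listPow (p ++ q) k ++ p := by
  rw [hθ.map_append, hθ.map_listPow, hθ.map_append, hp, hq, append_listPow_append]

theorem map_eq_self_of_conj (hθ : IsAntimorphism θ) {x z : List α} (hx : x ≠ [])
    (h : x ++ z = z ++ θ x) : θ z = z := by
  obtain ⟨p, q, k, hxpq, hθx, rfl⟩ := exists_listPow_of_conj hx h
  rw [hxpq, hθ.map_append] at hθx
  obtain ⟨hq, hp⟩ := List.append_inj hθx (hθ.length_map q)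
  exact hθ.map_listPow_append_eq_self hp hq k

theorem biCat_of_map_eq_self {a b : List α} (ha : θ a = a) (hb : θ b = b) :
    biCat θ a b = {a ++ b, b ++ a} := by
  simp [biCat, ha, hb]

theorem map_eq_self_or_map_eq_self_of_mem_biCat (hθ : IsAntimorphism θ)
    (hinv : Function.Involutive θ) {s v : List α} (hv : v ≠ [])
    (h : v ++ (s ++ v) ∈ biCat θ (θ v ++ s) v) : θ v = v ∨ θ s = s := by
  have hlen : (θ v).length = v.length := hθ.length_map v
  have of_prefix_v {a b : List α} (e : v ++ a = θ v ++ b) : θ v = v ∨ θ s = s :=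
    .inl (List.append_inj_left e hlen.symm).symm
  have of_conj_s (e : v ++ s = θ s ++ v) : θ v = v ∨ θ s = s := by
    rcases eq_or_ne s [] with rfl | hs
    · exact .inr (hθ.map_eq_nil_iff.mpr rfl)
    exact .inl (hθ.map_eq_self_of_conj (x := θ s) (hθ.map_eq_nil_iff.not.mpr hs)
      (by rw [hinv s]; exact e.symm))
  simp only [biCat, hθ.map_append, hinv v, Set.mem_insert_iff, Set.mem_singleton_iff] at h
  rcases h with e | e | e | e | e | e | e | e
  · exact of_prefix_v (e.trans (List.append_assoc _ _ _))
  · exact of_prefix_v (e.trans (List.append_assoc _ _ _))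
  · exact of_conj_s (List.append_cancel_right ((List.append_assoc v s v).trans e))
  · exact of_conj_s (List.append_inj' ((List.append_assoc v s v).trans e) hlen.symm).1
  · refine .inr (hθ.map_eq_self_of_conj (x := θ v) (hθ.map_eq_nil_iff.not.mpr hv) ?_)
    rw [hinv v]
    exact (List.append_cancel_left e).symm
  · exact .inr (List.append_cancel_right (List.append_cancel_left e)).symm
  · exact of_prefix_v e
  · exact of_prefix_v e

theorem map_eq_self_of_biCat_eq_of_map_eq_self (hθ : IsAntimorphism θ) {s v : List α}
    (hv : v ≠ []) (hvv : θ v = v) (h : biCat θ (v ++ s) v = biCat θ v (s ++ v)) :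
    θ s = s := by
  have hA : s ++ v ++ v ∈ biCat θ (v ++ s) v := by rw [h]; simp [biCat]
  have hB : θ s ++ v ++ v ∈ biCat θ v (s ++ v) := by
    rw [← h]; simp [biCat, hθ.map_append, hvv]
  simp only [biCat, List.append_assoc, hvv, hθ.map_append, Set.mem_insert_iff,
    List.append_cancel_left_eq, Set.mem_singleton_iff, or_true, Set.insert_eq_of_mem, true_or,
    List.append_cancel_right_eq] at hA
  rcases hA with e | e | e | e
  · refine hθ.map_eq_self_of_conj hv ?_
    rw [hvv]
    exact (List.append_cancel_right (bs := v) (by simpa using e)).symm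
  · exact e.symm
  · refine hθ.map_eq_self_of_conj (x := v ++ v) (by simp [hv]) ?_
    rw [hθ.map_append, hvv]
    simpa using e.symm
  · have hconj : s ++ v = v ++ θ s := List.append_cancel_right (bs := v) (by simpa using e)
    have hw : θ (s ++ v) = s ++ v := by rw [hθ.map_append, hvv, hconj]
    rw [biCat_of_map_eq_self hvv hw, Set.mem_insert_iff, Set.mem_singleton_iff] at hB
    rcases hB with e' | e'
    · exact (eq_of_conj_of_conj hconj (List.append_cancel_right (bs := v) (by simpa using e'))).symm
    · simpa using e'

theorem map_eq_self_of_biCat_eq (hθ : IsAntimorphism θ) (hinv : Function.Involutive θ)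
    {s v : List α} (hv : v ≠ []) (h : biCat θ (θ v ++ s) v = biCat θ v (s ++ v)) :
    θ s = s := by
  have hC : v ++ (s ++ v) ∈ biCat θ (θ v ++ s) v := by rw [h]; simp [biCat]
  rcases hθ.map_eq_self_or_map_eq_self_of_mem_biCat hinv hv hC with hvv | hs
  · rw [hvv] at h
    exact hθ.map_eq_self_of_biCat_eq_of_map_eq_self hv hvv h
  · exact hs

end IsAntimorphism

end Words

theorem conj_biCat_case3_general {α : Type*} (t : α → α) (ht : ∀ a, t (t a) = a)
    (θ : List α → List α) (hθ : ∀ u : List α, θ u = (u.map t).reverse)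
    (u v w : List α) (hv : v ≠ [])
    (h1 : u ++ v = θ v ++ w) (h2 : biCat θ u v = biCat θ v w) :
    (u = θ w ∧ ∃ γ : List α, θ γ = γ ∧ v = γ ++ w) ∨
    (∃ x y : List α, θ x = x ∧ θ y = y ∧ ∃ j : ℕ,
      u = listPow (x ++ y) (j + 1) ++ x ∧ u = w ∧ v = y ++ x) ∨
    (∃ x y : List α, θ y = y ∧ u = x ++ y ∧ u = θ w ∧ v = θ x) ∨
    (∃ x y : List α, θ x = x ∧ θ y = y ∧ u = x ++ y ∧ u = θ w ∧ v = x) ∨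
    (∃ a : List α, θ a = a ∧ ∃ m n : ℕ, 1 ≤ m ∧ 1 ≤ n ∧
      u = listPow a m ∧ w = u ∧ v = listPow a n) ∨
    (∃ t' : List α, t' ≠ [] ∧ ∃ k n : ℕ,
      u = θ t' ++ listPow (t' ++ θ t') k ∧ u = θ w ∧
      v = listPow (t' ++ θ t') n ++ t') := by
  have hanti : IsAntimorphism θ := .of_eq_reverse_map hθ
  have hinv : Function.Involutive θ := fun a => by simp [hθ, Function.comp_def, ht]
  rcases List.append_eq_append_iff.mp h1 with ⟨g, hθv, hvg⟩ | ⟨s, rfl, rfl⟩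
  · rw [hvg, hanti.map_append] at hθv
    obtain ⟨hwu, hg⟩ := List.append_inj' hθv (hanti.length_map g)
    exact .inl ⟨hwu.symm, g, hg, hvg⟩
  · have hs : θ s = s := hanti.map_eq_self_of_biCat_eq hinv hv h2
    exact .inr <| .inr <| .inl
      ⟨θ v, s, hs, rfl, by rw [hanti.map_append, hs], (hinv v).symm⟩

/-- If `uv = θ(v)w` and `u ⇄θ v = v ⇄θ w`, then one of the six listed
alternatives holds. -/
theorem conj_biCat_case3 {α : Type*} (t : α → α) (ht : ∀ a, t (t a) = a)
    (θ : List α → List α) (hθ : ∀ u : List α, θ u = (u.map t).reverse)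
    (u v w : List α) (hu : u ≠ []) (hv : v ≠ []) (hw : w ≠ [])
    (h1 : u ++ v = θ v ++ w) (h2 : biCat θ u v = biCat θ v w) :
    (u = θ w ∧ ∃ γ : List α, θ γ = γ ∧ v = γ ++ w) ∨
    (∃ x y : List α, θ x = x ∧ θ y = y ∧ ∃ j : ℕ,
      u = listPow (x ++ y) (j + 1) ++ x ∧ u = w ∧ v = y ++ x) ∨
    (∃ x y : List α, θ y = y ∧ u = x ++ y ∧ u = θ w ∧ v = θ x) ∨
    (∃ x y : List α, θ x = x ∧ θ y = y ∧ u = x ++ y ∧ u = θ w ∧ v = x) ∨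
    (∃ a : List α, θ a = a ∧ ∃ m n : ℕ, 1 ≤ m ∧ 1 ≤ n ∧
      u = listPow a m ∧ w = u ∧ v = listPow a n) ∨
    (∃ t' : List α, t' ≠ [] ∧ ∃ k n : ℕ,
      u = θ t' ++ listPow (t' ++ θ t') k ∧ u = θ w ∧
      v = listPow (t' ++ θ t') n ++ t') :=
  conj_biCat_case3_general t ht θ hθ u v w hv h1 h2
end

section
/- Let θ be the antimorphic involution induced by an involutive letter map t : Σ → Σ, and let u, v, w ∈ Σ+. Then u ⇄θ v = v ⇄θ w if and only if one of the following holds: (1) u = w; (2) u = θ(w); (3) u = sᵐ = w and v = sⁿ for some word s and m, n ≥ 1; (4) u = θ(w) = (pq)^{j+1}p and v = (pq)ʲp for some words p, q and j ≥ 0; (5) u = w = (pq)^{j+1}p and v = (pq)ʲp for some p, q ∈ P_θ and j ≥ 0; (6) u = w = xy and v = (xy)ⁱx for some x, y ∈ P_θ and i ≥ 0; (7) u = (xy)^{j+1}x = w and v = yx for some x, y ∈ P_θ and j ≥ 0; (8) u = xy = θ(w) and v = θ(x) for some word x and y ∈ P_θ; (9) u = xy = θ(w) and v = x for some x, y ∈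 P_θ; (10) u = θ(t')sᵏ = θ(w) and v = sⁿt' for some t' ∈ Σ+ and k, n ≥ 0, where s = t'θ(t'). -/
namespace BCAux
variable {α : Type*}

theorem take_app_le {l₁ l₂ : List α} {n : ℕ} (h : n ≤ l₁.length) :
    (l₁ ++ l₂).take n = l₁.take n := by
  rw [List.take_append, Nat.sub_eq_zero_of_le h, List.take_zero,
    List.append_nil]

theorem take_left'' {l₁ l₂ : List α} {n : ℕ} (h : l₁.length = n) :
    (l₁ ++ l₂).take n = l₁ := by
  rw [take_app_le h.ge, ← h, List.take_length]

theorem lp_succ (x : List α) (k : ℕ) : listPow x (k+1) = x ++ listPow x k := by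
  simp [listPow, List.replicate_succ]

theorem lp_len (x : List α) (k : ℕ) : (listPow x k).length = k * x.length := by
  induction k with
  | zero => simp [listPow]
  | succ k ih => rw [lp_succ]; simp [ih, Nat.succ_mul]; ring

theorem sq_cancel {A B : List α} (h : A ++ A = B ++ B) (hl : A.length = B.length) :
    A = B := ((List.append_inj h hl).1)

/-- vvs = svv implies vs = sv -/
theorem comm_of_vvs : ∀ (N : ℕ) (s v : List α), s.length ≤ N →
    v ++ v ++ s = s ++ (v ++ v) → v ++ s = s ++ v := by
  intro N
  induction N with
  | zero =>
    intro s v hs h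
    have : s = [] := List.eq_nil_of_length_eq_zero (Nat.le_zero.mp hs)
    simp [this]
  | succ N ih =>
    intro s v hs h
    rcases eq_or_ne v [] with rfl | hv
    · simp
    rcases le_or_gt s.length v.length with hle | hlt
    · -- s is a prefix of v
      have h2 : v.take s.length = s := by
        have e := congrArg (List.take s.length) h
        rw [take_app_le (show s.length ≤ (v ++ v).length by simp; omega),
          take_app_le hle, List.take_left] at e
        exact e
      have hvsplit : v = s ++ v.drop s.length := by
        conv_lhs => rw [← List.take_append_drop s.length v, h2]
      set v' := v.drop s.length with hv'
      have h3 : (v' ++ s) ++ (v' ++ s) = (s ++ v') ++ (s ++ v') := by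
        apply List.append_cancel_left (as := s)
        have e := h
        rw [hvsplit] at e
        simp only [List.append_assoc] at e ⊢
        exact e
      have h4 : v' ++ s = s ++ v' := sq_cancel h3 (by simp [Nat.add_comm])
      rw [hvsplit, List.append_assoc, h4]
    · -- v is a proper prefix of s
      have h2 : v = s.take v.length := by
        have e := congrArg (List.take v.length) h
        rw [take_app_le (show v.length ≤ (v ++ v).length by simp),
          List.take_left, take_app_le hlt.le] at e
        exact e
      have hssplit : s = v ++ s.drop v.length := by
        conv_lhs => rw [← List.take_append_drop v.length s, ← h2]
      set s₁ := s.drop v.length with hs₁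
      have hlen1 : s₁.length ≤ N := by
        have hvp : 0 < v.length := List.length_pos_iff.mpr hv
        have : s₁.length = s.length - v.length := by simp [hs₁]
        omega
      have h3 : v ++ v ++ s₁ = s₁ ++ (v ++ v) := by
        apply List.append_cancel_left (as := v)
        have e := h
        rw [hssplit] at e
        simp only [List.append_assoc] at e ⊢
        exact e
      have h4 := ih s₁ v hlen1 h3
      have goal2 : v ++ (v ++ s₁) = (v ++ s₁) ++ v := by
        rw [List.append_assoc, ← h4]
      rw [hssplit]; exact goal2

theorem pow_conj_l {u v w : List α} (h : u ++ v = v ++ w) :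
    ∀ k, listPow u k ++ v = v ++ listPow w k := by
  intro k
  induction k with
  | zero => simp [listPow]
  | succ k ih =>
    rw [lp_succ, lp_succ, List.append_assoc, ih, ← List.append_assoc, h,
      List.append_assoc]

theorem pow_conj_r {u v w : List α} (h : v ++ u = w ++ v) :
    ∀ k, v ++ listPow u k = listPow w k ++ v := by
  intro k
  induction k with
  | zero => simp [listPow]
  | succ k ih =>
    rw [lp_succ, lp_succ, ← List.append_assoc, h, List.append_assoc, ih,
      ← List.append_assoc]

/-- The key lemma: uv = vw and vu = wv imply u = w. -/
theorem key {u v w : List α} (h1 : u ++ v = v ++ w) (h2 : v ++ u = w ++ v) :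
    u = w := by
  have hlen : u.length = w.length := by
    have e := congrArg List.length h1
    simp only [List.length_append] at e
    omega
  rcases eq_or_ne v [] with rfl | hv
  · simpa using h1
  rcases eq_or_ne u [] with rfl | hu
  · have : w = [] := List.eq_nil_of_length_eq_zero (by simpa using hlen.symm)
    simp [this]
  have hk1 : 1 ≤ v.length := List.length_pos_iff.mpr hv
  have hu1 : 1 ≤ u.length := List.length_pos_iff.mpr hu
  have hkle : v.length ≤ (listPow u v.length).length := by
    rw [lp_len]
    calc v.length = v.length * 1 := by omega
    _ ≤ v.length * u.length := Nat.mul_le_mul_left _ hu1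
  have h3 := pow_conj_l h1 v.length
  have h4 := pow_conj_r h2 v.length
  have htk : (listPow u v.length).take v.length = v := by
    have e := congrArg (List.take v.length) h3
    rw [take_app_le hkle, List.take_left] at e
    exact e
  have hsplit : listPow u v.length = v ++ (listPow u v.length).drop v.length := by
    conv_lhs => rw [← List.take_append_drop v.length (listPow u v.length), htk]
  set s := (listPow u v.length).drop v.length with hs
  have h5 : s ++ v = listPow w v.length := by
    apply List.append_cancel_left (as := v)
    rw [← List.append_assoc, ← hsplit, h3]
  have h6 : v ++ v ++ s = s ++ (v ++ v) := by
    have e := h4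
    rw [hsplit, ← h5] at e
    simp only [List.append_assoc] at e ⊢
    exact e
  have h7 : v ++ s = s ++ v := comm_of_vvs s.length s v (le_refl _) h6
  have h8 : listPow u v.length = listPow w v.length := by rw [hsplit, h7, h5]
  obtain ⟨j, hj⟩ : ∃ j, v.length = j + 1 := ⟨v.length - 1, by omega⟩
  rw [hj, lp_succ, lp_succ] at h8
  exact (List.append_inj h8 hlen).1

section Main
variable (θ : List α → List α)
variable (hθθ : ∀ x, θ (θ x) = x) (hθapp : ∀ x y, θ (x ++ y) = θ y ++ θ x)
  (hθlen : ∀ x, (θ x).length = x.length)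

include hθθ

theorem bc_symm (a b : List α) : biCat θ a b = biCat θ b a := by
  ext x
  simp only [biCat, Set.mem_insert_iff, Set.mem_singleton_iff]
  tauto

theorem bc_thR (a b : List α) : biCat θ a (θ b) = biCat θ a b := by
  ext x
  simp only [biCat, Set.mem_insert_iff, Set.mem_singleton_iff, hθθ]
  tauto

theorem bc_thL (a b : List α) : biCat θ (θ a) b = biCat θ a b := by
  ext x
  simp only [biCat, Set.mem_insert_iff, Set.mem_singleton_iff, hθθ]
  tauto

include hθapp hθlen

/-- The palindromic case. -/
theorem palin {u v w : List α} (hS : biCat θ u v = biCat θ v w)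
    (hpu : θ u = u) (hpw : θ w = w) (hlen : u.length = w.length) : u = w := by
  have h1 : u ++ v ∈ biCat θ v w := by rw [← hS]; simp [biCat]
  have h2 : u ++ θ v ∈ biCat θ v w := by rw [← hS]; simp [biCat]
  simp only [biCat, Set.mem_insert_iff, Set.mem_singleton_iff] at h1 h2
  have hx : u ++ v = v ++ w ∨ u ++ v = θ v ++ w ∨ u = w := by
    rcases h1 with h|h|h|h|h|h|h|h
    · exact Or.inl h
    · rw [hpw] at h; exact Or.inl h
    · exact Or.inr (Or.inl h)
    · rw [hpw] at h; exact Or.inr (Or.inl h)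
    · exact Or.inr (Or.inr (List.append_inj h hlen).1)
    · exact Or.inr (Or.inr (List.append_inj' h (by rw [hθlen])).1)
    · rw [hpw] at h; exact Or.inr (Or.inr (List.append_inj h hlen).1)
    · rw [hpw] at h; exact Or.inr (Or.inr (List.append_inj' h (by rw [hθlen])).1)
  have hy : u ++ θ v = v ++ w ∨ u ++ θ v = θ v ++ w ∨ u = w := by
    rcases h2 with h|h|h|h|h|h|h|h
    · exact Or.inl h
    · rw [hpw] at h; exact Or.inl h
    · exact Or.inr (Or.inl h)
    · rw [hpw] at h; exact Or.inr (Or.inl h)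
    · exact Or.inr (Or.inr (List.append_inj' h (by rw [hθlen])).1)
    · exact Or.inr (Or.inr (List.append_inj h hlen).1)
    · rw [hpw] at h; exact Or.inr (Or.inr (List.append_inj' h (by rw [hθlen])).1)
    · rw [hpw] at h; exact Or.inr (Or.inr (List.append_inj h hlen).1)
  rcases hx with hx | hx | hx
  · rcases hy with hy | hy | hy
    · have hv' : v = θ v := List.append_cancel_left (hx.trans hy.symm)
      have e2 := congrArg θ hx
      rw [hθapp, hθapp, hpu, hpw, ← hv'] at e2
      exact key hx e2
    · have e2 := congrArg θ hy
      rw [hθapp, hθapp, hθθ, hpu, hpw] at e2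
      exact key hx e2
    · exact hy
  · rcases hy with hy | hy | hy
    · have e3 := congrArg θ hx
      rw [hθapp, hθapp, hpu, hpw, hθθ] at e3
      have e4 := congrArg θ hy
      rw [hθapp, hθapp, hθθ, hpu, hpw] at e4
      have hA : (u ++ u) ++ v = v ++ (w ++ w) := by
        calc (u ++ u) ++ v = u ++ (u ++ v) := by rw [List.append_assoc]
        _ = (u ++ θ v) ++ w := by rw [hx, List.append_assoc]
        _ = (v ++ w) ++ w := by rw [hy]
        _ = v ++ (w ++ w) := by rw [List.append_assoc]
      have hB : v ++ (u ++ u) = (w ++ w) ++ v := by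
        calc v ++ (u ++ u) = (v ++ u) ++ u := by rw [List.append_assoc]
        _ = w ++ (θ v ++ u) := by rw [e4, List.append_assoc]
        _ = (w ++ w) ++ v := by rw [e3, ← List.append_assoc]
      have h9 := key hA hB
      exact (List.append_inj h9 hlen).1
    · have hv' : θ v = v := List.append_cancel_left (hy.trans hx.symm)
      rw [hv'] at hx
      have e2 := congrArg θ hx
      rw [hθapp, hθapp, hpu, hpw, hv'] at e2
      exact key hx e2
    · exact hy
  · exact hx

/-- The case `|u| > |v|` when u starts with v. -/
theorem aux_gt {u v w : List α} (hS : biCat θ u v = biCat θ v w)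
    (hm : v.length < u.length) (hlen : u.length = w.length)
    (htk : u.take v.length = v) : u = w ∨ u = θ w := by
  by_cases hgw : u = w
  · exact Or.inl hgw
  by_cases hgtw : u = θ w
  · exact Or.inr hgtw
  exfalso
  have hne2 : θ u ≠ w := fun e => hgtw (by rw [← e, hθθ])
  have hne3 : θ u ≠ θ w := fun e => hgw (by rw [← hθθ u, e, hθθ])
  set m := v.length with hm0
  set a := u.drop m with ha0
  set b := u.take (u.length - m) with hb0
  have halen : a.length = u.length - m := by rw [ha0, List.length_drop]
  have hu_split : u = v ++ a := by
    conv_lhs => rw [← List.take_append_drop m u, htk, ← ha0]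
  have hdrlen : (u.drop (u.length - m)).length = m := by
    rw [List.length_drop]; omega
  have h1 : u ++ v ∈ biCat θ v w := by rw [← hS]; simp [biCat]
  have h2 : u ++ θ v ∈ biCat θ v w := by rw [← hS]; simp [biCat]
  have h3 : v ++ u ∈ biCat θ v w := by rw [← hS]; simp [biCat]
  have h4 : θ v ++ u ∈ biCat θ v w := by rw [← hS]; simp [biCat]
  simp only [biCat, Set.mem_insert_iff, Set.mem_singleton_iff] at h1 h2 h3 h4
  have tkuv : ∀ x : List α, (u ++ x).take m = v := fun x => by
    rw [take_app_le (le_of_lt hm), htk]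
  have hcl : ∀ x y : List α, u ++ x = v ++ y → a ++ x = y := by
    intro x y h
    apply List.append_cancel_left (as := v)
    rw [← List.append_assoc, ← hu_split, h]
  have hav : a ++ v = w ∨ a ++ v = θ w := by
    rcases h1 with h|h|h|h|h|h|h|h
    · exact Or.inl (hcl _ _ h)
    · exact Or.inr (hcl _ _ h)
    · have hpv : v = θ v := by
        have e := congrArg (List.take m) h
        rw [tkuv, take_left'' (hθlen v)] at e; exact e
      rw [← hpv] at h
      exact Or.inl (hcl _ _ h)
    · have hpv : v = θ v := by
        have e := congrArg (List.take m) h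
        rw [tkuv, take_left'' (hθlen v)] at e; exact e
      rw [← hpv] at h
      exact Or.inr (hcl _ _ h)
    · exact absurd (List.append_inj h hlen).1 hgw
    · exact absurd (List.append_inj' h (by rw [hθlen])).1 hgw
    · exact absurd (List.append_inj h (by rw [hθlen]; exact hlen)).1 hgtw
    · exact absurd (List.append_inj' h (by rw [hθlen])).1 hgtw
  have hav' : a ++ θ v = w ∨ a ++ θ v = θ w := by
    rcases h2 with h|h|h|h|h|h|h|h
    · exact Or.inl (hcl _ _ h)
    · exact Or.inr (hcl _ _ h)
    · have hpv : v = θ v := by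
        have e := congrArg (List.take m) h
        rw [tkuv, take_left'' (hθlen v)] at e; exact e
      rw [← hpv] at h
      exact Or.inl (by rw [← hpv]; exact hcl _ _ h)
    · have hpv : v = θ v := by
        have e := congrArg (List.take m) h
        rw [tkuv, take_left'' (hθlen v)] at e; exact e
      rw [← hpv] at h
      exact Or.inr (by rw [← hpv]; exact hcl _ _ h)
    · exact absurd (List.append_inj' h (by rw [hθlen])).1 hgw
    · exact absurd (List.append_inj h hlen).1 hgw
    · exact absurd (List.append_inj' h (by rw [hθlen])).1 hgtw
    · exact absurd (List.append_inj h (by rw [hθlen]; exact hlen)).1 hgtw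
  have husplit2 : v ++ u = (v ++ b) ++ u.drop (u.length - m) := by
    conv_lhs => rw [← List.take_append_drop (u.length - m) u, ← hb0]
    rw [List.append_assoc]
  have husplit3 : θ v ++ u = (θ v ++ b) ++ u.drop (u.length - m) := by
    conv_lhs => rw [← List.take_append_drop (u.length - m) u, ← hb0]
    rw [List.append_assoc]
  have hvb : (v ++ b = w ∨ v ++ b = θ w) ∧
      (u.drop (u.length - m) = v ∨ u.drop (u.length - m) = θ v) := by
    rcases h3 with h|h|h|h|h|h|h|h
    · exact absurd (List.append_cancel_left h) hgw
    · exact absurd (List.append_cancel_left h) hgtw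
    · have hpv : v = θ v := by
        have e := congrArg (List.take m) h
        rw [take_left'' rfl, take_left'' (hθlen v)] at e; exact e
      rw [← hpv] at h
      exact absurd (List.append_cancel_left h) hgw
    · have hpv : v = θ v := by
        have e := congrArg (List.take m) h
        rw [take_left'' rfl, take_left'' (hθlen v)] at e; exact e
      rw [← hpv] at h
      exact absurd (List.append_cancel_left h) hgtw
    · rw [husplit2] at h
      obtain ⟨e1, e2⟩ := List.append_inj' h hdrlen
      exact ⟨Or.inl e1, Or.inl e2⟩
    · rw [husplit2] at h
      obtain ⟨e1, e2⟩ := List.append_inj' h (by rw [hdrlen, hθlen])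
      exact ⟨Or.inl e1, Or.inr e2⟩
    · rw [husplit2] at h
      obtain ⟨e1, e2⟩ := List.append_inj' h hdrlen
      exact ⟨Or.inr e1, Or.inl e2⟩
    · rw [husplit2] at h
      obtain ⟨e1, e2⟩ := List.append_inj' h (by rw [hdrlen, hθlen])
      exact ⟨Or.inr e1, Or.inr e2⟩
  have htvb : θ v ++ b = w ∨ θ v ++ b = θ w := by
    rcases h4 with h|h|h|h|h|h|h|h
    · have hpv : θ v = v := by
        have e := congrArg (List.take m) h
        rw [take_left'' (hθlen v), take_left'' rfl] at e; exact e
      rw [hpv] at h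
      exact absurd (List.append_cancel_left h) hgw
    · have hpv : θ v = v := by
        have e := congrArg (List.take m) h
        rw [take_left'' (hθlen v), take_left'' rfl] at e; exact e
      rw [hpv] at h
      exact absurd (List.append_cancel_left h) hgtw
    · exact absurd (List.append_cancel_left h) hgw
    · exact absurd (List.append_cancel_left h) hgtw
    · rw [husplit3] at h
      exact Or.inl (List.append_inj' h hdrlen).1
    · rw [husplit3] at h
      exact Or.inl (List.append_inj' h (by rw [hdrlen, hθlen])).1
    · rw [husplit3] at h
      exact Or.inr (List.append_inj' h hdrlen).1
    · rw [husplit3] at h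
      exact Or.inr (List.append_inj' h (by rw [hdrlen, hθlen])).1
  by_cases hpv : θ v = v
  · -- v is a θ-palindrome
    have hdr : u.drop (u.length - m) = v := by
      rcases hvb.2 with h|h
      · exact h
      · rw [hpv] at h; exact h
    have hu2 : u = b ++ v := by
      conv_lhs => rw [← List.take_append_drop (u.length - m) u, ← hb0, hdr]
    have hvu : v ++ a = b ++ v := by rw [← hu_split, hu2]
    by_cases hab : a ++ v = v ++ b
    · have hab2 := key hab hvu
      rcases hav with h|h
      · exact hgw (by rw [hu2, ← hab2]; exact h)
      · exact hgtw (by rw [hu2, ← hab2]; exact h)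
    · have hba : b = θ a := by
        rcases hav with h5|h5 <;> rcases hvb.1 with h6|h6
        · exact absurd (h5.trans h6.symm) hab
        · have e := congrArg θ h5
          rw [hθapp, hpv] at e
          exact List.append_cancel_left (h6.trans e.symm)
        · have e := congrArg θ h5
          rw [hθapp, hpv, hθθ] at e
          exact List.append_cancel_left (h6.trans e.symm)
        · exact absurd (h5.trans h6.symm) hab
      have hθu : θ u = u := by
        rw [hu_split, hθapp, hpv, ← hba, ← hu2]
        exact hu_split
      have h5' : w ++ v ∈ biCat θ u v := by rw [hS]; simp [biCat]
      have h6' : v ++ w ∈ biCat θ u v := by rw [hS]; simp [biCat]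
      simp only [biCat, Set.mem_insert_iff, Set.mem_singleton_iff, hpv, hθu] at h5' h6'
      have hmw : m ≤ w.length := by omega
      have hwtklen : (w.take m).length = m := by rw [List.length_take]; omega
      have hwc : w = v ++ θ a := by
        have hsp : w ++ v = (w.take m ++ w.drop m) ++ v := by
          rw [List.take_append_drop]
        have hii : w ++ v = v ++ u → w = v ++ θ a := by
          intro h
          rw [hsp, List.append_assoc] at h
          obtain ⟨e1, e2⟩ := List.append_inj h hwtklen
          have e3 : w.drop m ++ v = θ a ++ v := by rw [e2, hu2, hba]
          have e4 := (List.append_inj' e3 rfl).1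
          conv_lhs => rw [← List.take_append_drop m w, e1, e4]
        have hjj : w ++ v = u ++ v → False := fun h =>
          hgw (List.append_inj h (by omega)).1.symm
        rcases h5' with h|h|h|h|h|h|h|h
        · exact absurd h hjj
        · exact absurd h hjj
        · exact absurd h hjj
        · exact absurd h hjj
        · exact hii h
        · exact hii h
        · exact hii h
        · exact hii h
      have hkw : (w.drop (u.length - m)).length = m := by
        rw [List.length_drop]; omega
      have hwd : w = a ++ v := by
        have hsp : v ++ w = (v ++ w.take (u.length - m)) ++ w.drop (u.length - m) := by
          rw [List.append_assoc, List.take_append_drop]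
        have hii : v ++ w = u ++ v → w = a ++ v := by
          intro h
          rw [hsp] at h
          obtain ⟨e1, e2⟩ := List.append_inj' h hkw
          have e3 : v ++ w.take (u.length - m) = v ++ a := by rw [e1, hu_split]
          have e4 := List.append_cancel_left e3
          conv_lhs => rw [← List.take_append_drop (u.length - m) w, e4, e2]
        have hjj : v ++ w = v ++ u → False := fun h =>
          hgw (List.append_cancel_left h).symm
        rcases h6' with h|h|h|h|h|h|h|h
        · exact hii h
        · exact hii h
        · exact hii h
        · exact hii h
        · exact absurd h hjj
        · exact absurd h hjj
        · exact absurd h hjj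
        · exact absurd h hjj
      have e1 : a ++ v = v ++ θ a := hwd.symm.trans hwc
      have e2 : v ++ a = θ a ++ v := by rw [hvu, hba]
      have e5 := key e1 e2
      exact hgw (by rw [hu_split, e2, ← e5, ← hwd])
  · -- v ≠ θ v
    have hw' : (a ++ v = w ∧ a ++ θ v = θ w) ∨ (a ++ v = θ w ∧ a ++ θ v = w) := by
      rcases hav with h5|h5 <;> rcases hav' with h6|h6
      · exact absurd (List.append_cancel_left (h5.trans h6.symm)).symm hpv
      · exact Or.inl ⟨h5, h6⟩
      · exact Or.inr ⟨h5, h6⟩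
      · exact absurd (List.append_cancel_left (h5.trans h6.symm)).symm hpv
    have hVB : v ++ b = a ++ v ∨ v ++ b = a ++ θ v := by
      rcases hw' with ⟨e1, e2⟩|⟨e1, e2⟩ <;> rcases hvb.1 with h|h
      · exact Or.inl (by rw [h, ← e1])
      · exact Or.inr (by rw [h, ← e2])
      · exact Or.inr (by rw [h, ← e2])
      · exact Or.inl (by rw [h, ← e1])
    have hTVB : θ v ++ b = a ++ v ∨ θ v ++ b = a ++ θ v := by
      rcases hw' with ⟨e1, e2⟩|⟨e1, e2⟩ <;> rcases htvb with h|h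
      · exact Or.inl (by rw [h, ← e1])
      · exact Or.inr (by rw [h, ← e2])
      · exact Or.inr (by rw [h, ← e2])
      · exact Or.inl (by rw [h, ← e1])
    rcases le_or_gt m (u.length - m) with hkm | hkm
    · -- long a : contradiction via v = take m a = θ v
      have hma : m ≤ a.length := by omega
      have e1 : v = a.take m := by
        rcases hVB with h|h
        · have e := congrArg (List.take m) h
          rw [take_left'' rfl, take_app_le hma] at e; exact e
        · have e := congrArg (List.take m) h
          rw [take_left'' rfl, take_app_le hma] at e; exact e
      have e2 : θ v = a.take m := by
        rcases hTVB with h|h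
        · have e := congrArg (List.take m) h
          rw [take_left'' (hθlen v), take_app_le hma] at e; exact e
        · have e := congrArg (List.take m) h
          rw [take_left'' (hθlen v), take_app_le hma] at e; exact e
      exact hpv (e2.trans e1.symm)
    · -- short a
      have hbtk : v.take (u.length - m) = b := by
        have e : u.take (u.length - m) = (v ++ a).take (u.length - m) := by
          rw [← hu_split]
        rw [take_app_le hkm.le] at e
        rw [hb0, e]
      have hba : b = a := by
        rcases hVB with h|h
        · have e := congrArg (List.take (u.length - m)) h
          rw [take_app_le hkm.le, hbtk, take_left'' halen] at e; exact e
        · have e := congrArg (List.take (u.length - m)) h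
          rw [take_app_le hkm.le, hbtk, take_left'' halen] at e; exact e
      rcases hVB with h|h
      · -- v ++ a = a ++ v, so u = a ++ v ∈ {w, θ w}
        rw [hba] at h
        rcases hw' with ⟨e1, _⟩|⟨e1, _⟩
        · exact hgw (by rw [hu_split, h, e1])
        · exact hgtw (by rw [hu_split, h, e1])
      · rw [hba] at h
        -- h : v ++ a = a ++ θ v
        rcases hTVB with h'|h'
        · rw [hba] at h'
          -- h' : θ v ++ a = a ++ v ; key(v, a, θ v)
          exact hpv (key h h'.symm).symm
        · rw [hba] at h'
          -- h' : θ v ++ a = a ++ θ v = v ++ a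
          have := List.append_inj' (h'.trans h.symm) rfl
          exact hpv this.1
  
theorem main {u v w : List α} (hS : biCat θ u v = biCat θ v w) : u = w ∨ u = θ w := by
  have h1 : u ++ v ∈ biCat θ v w := by rw [← hS]; simp [biCat]
  simp only [biCat, Set.mem_insert_iff, Set.mem_singleton_iff] at h1
  have hlen : u.length = w.length := by
    rcases h1 with h|h|h|h|h|h|h|h <;>
      (have e := congrArg List.length h
       simp only [List.length_append, hθlen] at e
       omega)
  rcases lt_trichotomy u.length v.length with hcmp | hcmp | hcmp
  · -- |u| < |v|
    by_cases hgw : u = w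
    · exact Or.inl hgw
    by_cases hgtw : u = θ w
    · exact Or.inr hgtw
    have hne2 : θ u ≠ w := fun e => hgtw (by rw [← e, hθθ])
    have hne3 : θ u ≠ θ w := fun e => hgw (by rw [← hθθ u, e, hθθ])
    have h2 : θ u ++ v ∈ biCat θ v w := by rw [← hS]; simp [biCat]
    have h3 : w ++ v ∈ biCat θ u v := by rw [hS]; simp [biCat]
    have h4 : θ w ++ v ∈ biCat θ u v := by rw [hS]; simp [biCat]
    simp only [biCat, Set.mem_insert_iff, Set.mem_singleton_iff] at h2 h3 h4
    have hA : u = v.take u.length ∨ u = (θ v).take u.length := by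
      rcases h1 with h|h|h|h|h|h|h|h
      · left; have e := congrArg (List.take u.length) h
        rw [take_left'' rfl, take_app_le hcmp.le] at e; exact e
      · left; have e := congrArg (List.take u.length) h
        rw [take_left'' rfl, take_app_le hcmp.le] at e; exact e
      · right; have e := congrArg (List.take u.length) h
        rw [take_left'' rfl, take_app_le (by rw [hθlen]; exact hcmp.le)] at e; exact e
      · right; have e := congrArg (List.take u.length) h
        rw [take_left'' rfl, take_app_le (by rw [hθlen]; exact hcmp.le)] at e; exact e
      · exact absurd (List.append_inj h hlen).1 hgw
      · exact absurd (List.append_inj' h (by rw [hθlen])).1 hgw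
      · exact absurd (List.append_inj h (by rw [hθlen]; exact hlen)).1 hgtw
      · exact absurd (List.append_inj' h (by rw [hθlen])).1 hgtw
    have hB : θ u = v.take u.length ∨ θ u = (θ v).take u.length := by
      rcases h2 with h|h|h|h|h|h|h|h
      · left; have e := congrArg (List.take u.length) h
        rw [take_left'' (hθlen u), take_app_le hcmp.le] at e; exact e
      · left; have e := congrArg (List.take u.length) h
        rw [take_left'' (hθlen u), take_app_le hcmp.le] at e; exact e
      · right; have e := congrArg (List.take u.length) h
        rw [take_left'' (hθlen u), take_app_le (by rw [hθlen]; exact hcmp.le)] at e; exact e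
      · right; have e := congrArg (List.take u.length) h
        rw [take_left'' (hθlen u), take_app_le (by rw [hθlen]; exact hcmp.le)] at e; exact e
      · exact absurd (List.append_inj h (by rw [hθlen]; exact hlen)).1 hne2
      · exact absurd (List.append_inj' h (by rw [hθlen])).1 hne2
      · exact absurd (List.append_inj h (by rw [hθlen, hθlen]; exact hlen)).1 hne3
      · exact absurd (List.append_inj' h (by rw [hθlen])).1 hne3
    have hC : w = v.take u.length ∨ w = (θ v).take u.length := by
      rcases h3 with h|h|h|h|h|h|h|h
      · exact absurd (List.append_inj h hlen.symm).1.symm hgw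
      · exact absurd (List.append_inj' h (by rw [hθlen])).1.symm hgw
      · exact absurd (List.append_inj h (by rw [hθlen]; exact hlen.symm)).1.symm hne2
      · exact absurd (List.append_inj' h (by rw [hθlen])).1.symm hne2
      · left; have e := congrArg (List.take u.length) h
        rw [take_left'' hlen.symm, take_app_le hcmp.le] at e; exact e
      · left; have e := congrArg (List.take u.length) h
        rw [take_left'' hlen.symm, take_app_le hcmp.le] at e; exact e
      · right; have e := congrArg (List.take u.length) h
        rw [take_left'' hlen.symm, take_app_le (by rw [hθlen]; exact hcmp.le)] at e; exact e
      · right; have e := congrArg (List.take u.length) h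
        rw [take_left'' hlen.symm, take_app_le (by rw [hθlen]; exact hcmp.le)] at e; exact e
    have hD : θ w = v.take u.length ∨ θ w = (θ v).take u.length := by
      rcases h4 with h|h|h|h|h|h|h|h
      · exact absurd (List.append_inj h (by rw [hθlen]; omega)).1.symm hgtw
      · exact absurd (List.append_inj' h (by rw [hθlen])).1.symm hgtw
      · exact absurd (List.append_inj h (by rw [hθlen, hθlen]; exact hlen.symm)).1.symm hne3
      · exact absurd (List.append_inj' h (by rw [hθlen])).1.symm hne3
      · left; have e := congrArg (List.take u.length) h
        rw [take_left'' (by rw [hθlen]; omega), take_app_le hcmp.le] at e; exact e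
      · left; have e := congrArg (List.take u.length) h
        rw [take_left'' (by rw [hθlen]; omega), take_app_le hcmp.le] at e; exact e
      · right; have e := congrArg (List.take u.length) h
        rw [take_left'' (by rw [hθlen]; omega), take_app_le (by rw [hθlen]; exact hcmp.le)] at e
        exact e
      · right; have e := congrArg (List.take u.length) h
        rw [take_left'' (by rw [hθlen]; omega), take_app_le (by rw [hθlen]; exact hcmp.le)] at e
        exact e
    rcases hA with hA|hA <;> rcases hB with hB|hB <;> rcases hC with hC|hC <;>
      rcases hD with hD|hD <;>
      first
      | exact absurd (hA.trans hC.symm) hgw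
      | exact absurd (hA.trans hD.symm) hgtw
      | exact absurd (hB.trans hC.symm) hne2
      | exact absurd (hB.trans hD.symm) hne3
      | exact Or.inl (palin θ hθθ hθapp hθlen hS (hB.trans hA.symm) (hD.trans hC.symm) hlen)
  · -- |u| = |v|
    rcases h1 with h|h|h|h|h|h|h|h
    · obtain ⟨e1, e2⟩ := List.append_inj h hcmp
      exact Or.inl (e1.trans e2)
    · obtain ⟨e1, e2⟩ := List.append_inj h hcmp
      exact Or.inr (e1.trans e2)
    · obtain ⟨e1, e2⟩ := List.append_inj h (by rw [hθlen]; exact hcmp)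
      exact Or.inr (by rw [e1, e2])
    · obtain ⟨e1, e2⟩ := List.append_inj h (by rw [hθlen]; exact hcmp)
      exact Or.inl (by rw [e1, e2, hθθ])
    · exact Or.inl (List.append_inj h hlen).1
    · exact Or.inl (List.append_inj' h (by rw [hθlen])).1
    · exact Or.inr (List.append_inj h (by rw [hθlen]; exact hlen)).1
    · exact Or.inr (List.append_inj' h (by rw [hθlen])).1
  · -- |u| > |v|
    have hTK : u.take v.length = v ∨ u.take v.length = θ v ∨ u = w ∨ u = θ w := by
      rcases h1 with h|h|h|h|h|h|h|h
      · left; have e := congrArg (List.take v.length) h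
        rw [take_app_le hcmp.le, List.take_left] at e; exact e
      · left; have e := congrArg (List.take v.length) h
        rw [take_app_le hcmp.le, List.take_left] at e; exact e
      · right; left; have e := congrArg (List.take v.length) h
        rw [take_app_le hcmp.le, take_left'' (hθlen v)] at e; exact e
      · right; left; have e := congrArg (List.take v.length) h
        rw [take_app_le hcmp.le, take_left'' (hθlen v)] at e; exact e
      · exact Or.inr (Or.inr (Or.inl (List.append_inj h hlen).1))
      · exact Or.inr (Or.inr (Or.inl (List.append_inj' h (by rw [hθlen])).1))
      · exact Or.inr (Or.inr (Or.inr (List.append_inj h (by rw [hθlen]; exact hlen)).1))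
      · exact Or.inr (Or.inr (Or.inr (List.append_inj' h (by rw [hθlen])).1))
    rcases hTK with h|h|h|h
    · exact aux_gt θ hθθ hθapp hθlen hS hcmp hlen h
    · have hS' : biCat θ u (θ v) = biCat θ (θ v) w := by
        rw [bc_thR θ hθθ, bc_thL θ hθθ]; exact hS
      exact aux_gt θ hθθ hθapp hθlen hS' (by rw [hθlen]; exact hcmp) hlen
        (by rw [hθlen]; exact h)
    · exact Or.inl h
    · exact Or.inr h

end Main
end BCAux


/-- Characterization of ⇄θ-conjugacy: `u ⇄θ v = v ⇄θ w` iff one of the ten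
listed alternatives holds. -/
theorem biCat_conjugacy_iff {α : Type*} (t : α → α) (ht : ∀ a, t (t a) = a)
    (θ : List α → List α) (hθ : ∀ u : List α, θ u = (u.map t).reverse)
    (u v w : List α) (hu : u ≠ []) (hv : v ≠ []) (hw : w ≠ []) :
    biCat θ u v = biCat θ v w ↔
    (u = w) ∨
    (u = θ w) ∨
    (∃ s : List α, ∃ m n : ℕ, 1 ≤ m ∧ 1 ≤ n ∧
      u = listPow s m ∧ w = u ∧ v = listPow s n) ∨
    (∃ p q : List α, ∃ j : ℕ, u = θ w ∧
      u = listPow (p ++ q) (j + 1) ++ p ∧ v = listPow (p ++ q) j ++ p) ∨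
    (∃ p q : List α, θ p = p ∧ θ q = q ∧ ∃ j : ℕ, u = w ∧
      u = listPow (p ++ q) (j + 1) ++ p ∧ v = listPow (p ++ q) j ++ p) ∨
    (∃ x y : List α, θ x = x ∧ θ y = y ∧ ∃ i : ℕ,
      u = x ++ y ∧ w = u ∧ v = listPow (x ++ y) i ++ x) ∨
    (∃ x y : List α, θ x = x ∧ θ y = y ∧ ∃ j : ℕ,
      u = listPow (x ++ y) (j + 1) ++ x ∧ u = w ∧ v = y ++ x) ∨
    (∃ x y : List α, θ y = y ∧ u = x ++ y ∧ u = θ w ∧ v = θ x) ∨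
    (∃ x y : List α, θ x = x ∧ θ y = y ∧ u = x ++ y ∧ u = θ w ∧ v = x) ∨
    (∃ t' : List α, t' ≠ [] ∧ ∃ k n : ℕ,
      u = θ t' ++ listPow (t' ++ θ t') k ∧ u = θ w ∧
      v = listPow (t' ++ θ t') n ++ t') := by
  have hθθ : ∀ x, θ (θ x) = x := by
    intro x
    simp only [hθ, List.map_reverse, List.reverse_reverse, List.map_map]
    rw [show t ∘ t = id from funext ht, List.map_id]
  have hθapp : ∀ x y : List α, θ (x ++ y) = θ y ++ θ x := by
    intro x y; simp [hθ]
  have hθlen : ∀ x : List α, (θ x).length = x.length := by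
    intro x; simp [hθ]
  constructor
  · intro hS
    rcases BCAux.main θ hθθ hθapp hθlen hS with h | h
    · exact Or.inl h
    · exact Or.inr (Or.inl h)
  · intro h
    have hgoal : u = w ∨ u = θ w := by
      rcases h with h|h|h|h|h|h|h|h|h|h
      · exact Or.inl h
      · exact Or.inr h
      · obtain ⟨s, m, n, _, _, _, hw', _⟩ := h; exact Or.inl hw'.symm
      · obtain ⟨p, q, j, h', _⟩ := h; exact Or.inr h'
      · obtain ⟨p, q, _, _, j, h', _⟩ := h; exact Or.inl h'
      · obtain ⟨x, y, _, _, i, _, hw', _⟩ := h; exact Or.inl hw'.symm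
      · obtain ⟨x, y, _, _, j, _, h', _⟩ := h; exact Or.inl h'
      · obtain ⟨x, y, _, _, h', _⟩ := h; exact Or.inr h'
      · obtain ⟨x, y, _, _, _, h', _⟩ := h; exact Or.inr h'
      · obtain ⟨t', _, k, n, _, h', _⟩ := h; exact Or.inr h'
    rcases hgoal with h | h
    · rw [h]; exact BCAux.bc_symm θ hθθ w v
    · rw [h, BCAux.bc_thL θ hθθ]; exact BCAux.bc_symm θ hθθ w v
end
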